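/- arXiv:1508.00302 — 4 statements merged into one kernel-verified Lean document; each statement's English description precedes it below -/
import Mathlib

section
/- Let V be a real inner product space of dimension m ≥ 2 with a distinguished unit vector ξ, and let D = ξ^⊥ with dim D ≥ 4, equipped with a linear map φ : V → V forming an almost contact metric structure. Suppose θ is a linear functional on V, W ∈ V a vector with W ⊥ ξ, and f₂ ∈ ℝ, such that for all X, Y ∈ D: −θ(Y)X + θ(X)Y + f₂{−⟨W, φY⟩φX + ⟨W, φX⟩φY + 2⟨φX,Y⟩ φW} = 0. Then f₂ W = 0 and θ vanishes on D. -/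
open RealInnerProductSpace

lemma exists_orth3 {V : Type*} [NormedAddCommGroup V] [InnerProductSpace ℝ V]
    [FiniteDimensional ℝ V] (hdim : 5 ≤ Module.finrank ℝ V) (a b c : V) :
    ∃ X : V, X ≠ 0 ∧ ⟪a, X⟫ = 0 ∧ ⟪b, X⟫ = 0 ∧ ⟪c, X⟫ = 0 := by
  classical
  set S := Submodule.span ℝ ({a, b, c} : Set V) with hS
  have hfin : Module.finrank ℝ S ≤ 3 := by
    have h1 := finrank_span_finset_le_card (R := ℝ) ({a, b, c} : Finset V)
    have h2 : (({a, b, c} : Finset V) : Set V) = ({a, b, c} : Set V) := by simp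
    rw [h2] at h1
    exact h1.trans (by
      exact (Finset.card_insert_le _ _).trans (Nat.succ_le_succ (Finset.card_insert_le _ _)))
  have hne : S ≠ ⊤ := by
    intro h
    rw [h, finrank_top] at hfin
    omega
  haveI : CompleteSpace S := FiniteDimensional.complete ℝ S
  have hbot : Sᗮ ≠ ⊥ := fun h => hne (Submodule.orthogonal_eq_bot_iff.mp h)
  obtain ⟨X, hXmem, hX0⟩ := Submodule.exists_mem_ne_zero_of_ne_bot hbot
  refine ⟨X, hX0, ?_, ?_, ?_⟩ <;>
    exact (Submodule.mem_orthogonal S X).mp hXmem _ (Submodule.subset_span (by simp))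

theorem gssf_f2V_eq_zero
    {V : Type*} [NormedAddCommGroup V] [InnerProductSpace ℝ V] [FiniteDimensional ℝ V]
    (hdim : 5 ≤ Module.finrank ℝ V)
    (φ : V →ₗ[ℝ] V) (ξ : V) (hξ : ‖ξ‖ = 1)
    (hφ2 : ∀ X, φ (φ X) = -X + ⟪ξ, X⟫ • ξ)
    (hφξ : φ ξ = 0)
    (hηφ : ∀ X, ⟪ξ, φ X⟫ = 0)
    (hmet : ∀ X Y, ⟪φ X, φ Y⟫ = ⟪X, Y⟫ - ⟪ξ, X⟫ * ⟪ξ, Y⟫)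
    (θ : V →ₗ[ℝ] ℝ) (W : V) (hW : ⟪ξ, W⟫ = 0) (f₂ : ℝ)
    (heq : ∀ X Y : V, ⟪ξ, X⟫ = 0 → ⟪ξ, Y⟫ = 0 →
      -(θ Y) • X + (θ X) • Y
        + f₂ • (-(⟪W, φ Y⟫ • φ X) + ⟪W, φ X⟫ • φ Y + (2 * ⟪φ X, Y⟫) • φ W) = 0) :
    f₂ • W = 0 ∧ ∀ X : V, ⟪ξ, X⟫ = 0 → θ X = 0 := by
  -- skew-symmetry of φ
  have hskew : ∀ X Y : V, ⟪φ X, Y⟫ = -⟪X, φ Y⟫ := by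
    intro X Y
    have h := hmet (φ X) Y
    rw [hφ2 X] at h
    simp only [inner_add_left, inner_neg_left, real_inner_smul_left, hηφ, mul_zero,
      add_zero, zero_mul, sub_zero] at h
    linarith
  have hself : ∀ X : V, ⟪X, φ X⟫ = 0 := by
    intro X
    have h := hskew X X
    rw [real_inner_comm] at h
    linarith
  -- θ vanishes on D
  have hθD : ∀ Y : V, ⟪ξ, Y⟫ = 0 → θ Y = 0 := by
    intro Y hY
    obtain ⟨X, hX0, hξX, hYX, hφYX⟩ := exists_orth3 hdim ξ Y (φ Y)
    have hE := heq X Y hξX hY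
    have h := congrArg (fun v : V => (⟪X, v⟫ : ℝ)) hE
    have e1 : ⟪X, Y⟫ = 0 := by rw [real_inner_comm]; exact hYX
    have e3 : ⟪X, φ Y⟫ = 0 := by rw [real_inner_comm]; exact hφYX
    have e4 : ⟪φ X, Y⟫ = 0 := by rw [hskew, e3, neg_zero]
    simp only [inner_add_right, real_inner_smul_right, inner_neg_right, inner_zero_right,
      e1, e3, e4, hself, mul_zero, add_zero, zero_add, neg_zero, zero_mul] at h
    have hXX : ⟪X, X⟫ ≠ 0 := by
      simpa [inner_self_eq_zero] using hX0
    rcases mul_eq_zero.mp (by linarith : (-(θ Y)) * ⟪X, X⟫ = 0) with h' | h'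
    · linarith
    · exact absurd h' hXX
  refine ⟨?_, hθD⟩
  -- now the f₂ part
  obtain ⟨X, hX0, hξX, hWX, hφWX⟩ := exists_orth3 hdim ξ W (φ W)
  have hE := heq X (φ X) hξX (hηφ X)
  have h := congrArg (fun v : V => (⟪φ W, v⟫ : ℝ)) hE
  have eWφX : ⟪W, φ X⟫ = 0 := by
    have := hskew W X
    rw [hφWX] at this
    linarith
  have eφWX : ⟪φ W, X⟫ = 0 := hφWX
  have eφWφX : ⟪φ W, φ X⟫ = 0 := by rw [hmet, hW, hWX, zero_mul, sub_zero]
  have eWφφX : ⟪W, φ (φ X)⟫ = 0 := by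
    rw [hφ2, hξX, zero_smul, add_zero, inner_neg_right, hWX, neg_zero]
  have eφWφφX : ⟪φ W, φ (φ X)⟫ = 0 := by
    rw [hφ2 X, hξX, zero_smul, add_zero, inner_neg_right, eφWX, neg_zero]
  have eφXφX : ⟪φ X, φ X⟫ = ⟪X, X⟫ := by rw [hmet, hξX, zero_mul, sub_zero]
  have eφWφW : ⟪φ W, φ W⟫ = ⟪W, W⟫ := by rw [hmet, hW, zero_mul, sub_zero]
  have hθX : θ X = 0 := hθD X hξX
  have hθφX : θ (φ X) = 0 := hθD (φ X) (hηφ X)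
  simp only [inner_add_right, real_inner_smul_right, inner_neg_right, inner_zero_right,
    hθX, hθφX, eWφX, eφWX, eφWφX, eWφφX, eφWφφX, eφXφX, eφWφW,
    mul_zero, zero_mul, add_zero, zero_add, neg_zero] at h
  have hXX : ⟪X, X⟫ ≠ 0 := by simpa [inner_self_eq_zero] using hX0
  have hfW : f₂ * ⟪W, W⟫ = 0 := by
    rcases mul_eq_zero.mp h with h' | h'
    · rw [h', zero_mul]
    · rcases mul_eq_zero.mp h' with h'' | h''
      · rcases mul_eq_zero.mp h'' with h3 | h3
        · norm_num at h3
        · exact absurd h3 hXX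
      · rw [h'', mul_zero]
  have : ⟪f₂ • W, f₂ • W⟫ = 0 := by
    rw [real_inner_smul_left, real_inner_smul_right]
    calc f₂ * (f₂ * ⟪W, W⟫) = f₂ * 0 := by rw [hfW]
    _ = 0 := mul_zero _
  exact inner_self_eq_zero.mp this
end

section
/- Let V be a real inner product space of dimension m ≥ 5 with unit vector ξ and an almost contact metric structure (ψ, ξ, η, ⟨,⟩). Suppose u, v ∈ V are vectors such that for every unit vector X orthogonal to ξ: ⟨u, X⟩ψX − ⟨u, ψX⟩X + v = 0. Then v = 0 and u is proportional to ξ. -/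
open RealInnerProductSpace

lemma exists_unit_ortho3
    {V : Type*} [NormedAddCommGroup V] [InnerProductSpace ℝ V] [FiniteDimensional ℝ V]
    (hdim : 5 ≤ Module.finrank ℝ V) (a b c : V) :
    ∃ e : V, ‖e‖ = 1 ∧ ⟪a, e⟫ = 0 ∧ ⟪b, e⟫ = 0 ∧ ⟪c, e⟫ = 0 := by
  classical
  set K : Submodule ℝ V := Submodule.span ℝ (Set.range ![a, b, c]) with hKdef
  have hK3 : Module.finrank ℝ K ≤ 3 := by
    have h := finrank_range_le_card (R := ℝ) ![a, b, c]
    rw [Set.finrank] at h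
    simpa using h
  have hsum : Module.finrank ℝ K + Module.finrank ℝ Kᗮ = Module.finrank ℝ V :=
    K.finrank_add_finrank_orthogonal
  have hpos : 0 < Module.finrank ℝ Kᗮ := by omega
  have hne : Kᗮ ≠ ⊥ := by
    intro h
    rw [h, finrank_bot] at hpos
    exact lt_irrefl 0 hpos
  obtain ⟨x, hxK, hx0⟩ := Submodule.exists_mem_ne_zero_of_ne_bot hne
  have hxn : ‖x‖ ≠ 0 := norm_ne_zero_iff.mpr hx0
  refine ⟨‖x‖⁻¹ • x, ?_, ?_, ?_, ?_⟩
  · rw [norm_smul, norm_inv, norm_norm, inv_mul_cancel₀ hxn]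
  all_goals
    rw [inner_smul_right]
    have : ∀ y ∈ K, ⟪y, x⟫ = 0 := (Submodule.mem_orthogonal K x).mp hxK
  · rw [this a (Submodule.subset_span ⟨0, rfl⟩)]; ring
  · rw [this b (Submodule.subset_span ⟨1, rfl⟩)]; ring
  · rw [this c (Submodule.subset_span ⟨2, rfl⟩)]; ring

theorem pointwise_step_Nk
    {V : Type*} [NormedAddCommGroup V] [InnerProductSpace ℝ V] [FiniteDimensional ℝ V]
    (hdim : 5 ≤ Module.finrank ℝ V)
    (ψ : V →ₗ[ℝ] V) (ξ : V) (hξ : ‖ξ‖ = 1)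
    (hψ2 : ∀ X, ψ (ψ X) = -X + ⟪ξ, X⟫ • ξ)
    (hψξ : ψ ξ = 0) (hηψ : ∀ X, ⟪ξ, ψ X⟫ = 0)
    (hmet : ∀ X Y, ⟪ψ X, ψ Y⟫ = ⟪X, Y⟫ - ⟪ξ, X⟫ * ⟪ξ, Y⟫)
    (u v : V)
    (heq : ∀ X : V, ‖X‖ = 1 → ⟪ξ, X⟫ = 0 →
      ⟪u, X⟫ • ψ X - ⟪u, ψ X⟫ • X + v = 0) :
    v = 0 ∧ ∃ c : ℝ, u = c • ξ := by
  -- skewness of ψ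
  have hskew : ∀ X Y : V, ⟪ψ X, Y⟫ = -⟪X, ψ Y⟫ := by
    intro X Y
    have h := hmet X (ψ Y)
    rw [hψ2] at h
    simp only [inner_add_right, inner_neg_right, inner_smul_right, hηψ] at h
    have hξψ : ⟪ψ X, ξ⟫ = 0 := by rw [real_inner_comm]; exact hηψ X
    rw [hξψ] at h
    linarith
  -- key claim: for every unit X ⊥ ξ, ⟪u,X⟫ = 0, ⟪u,ψX⟫ = 0, v = 0
  have key : ∀ X : V, ‖X‖ = 1 → ⟪ξ, X⟫ = 0 → ⟪u, X⟫ = 0 ∧ ⟪u, ψ X⟫ = 0 ∧ v = 0 := by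
    intro X hX hXξ
    obtain ⟨X', hX', haX', hbX', hcX'⟩ := exists_unit_ortho3 hdim ξ X (ψ X)
    have hA := heq X hX hXξ
    have hB := heq X' hX' haX'
    -- combine
    have hcomb : ⟪u, X⟫ • ψ X - ⟪u, ψ X⟫ • X - (⟪u, X'⟫ • ψ X' - ⟪u, ψ X'⟫ • X') = 0 := by
      have : (⟪u, X⟫ • ψ X - ⟪u, ψ X⟫ • X + v) - (⟪u, X'⟫ • ψ X' - ⟪u, ψ X'⟫ • X' + v) = 0 := by
        rw [hA, hB]; simp
      linear_combination (norm := abel) this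
    -- inner products of basic vectors
    have hXX : ⟪X, X⟫ = 1 := by
      rw [real_inner_self_eq_norm_sq, hX]; norm_num
    have hpXpX : ⟪ψ X, ψ X⟫ = 1 := by rw [hmet, hXX, hXξ]; ring
    have hXpX : ⟪X, ψ X⟫ = 0 := by
      linarith [hskew X X, real_inner_comm (ψ X) X]
    have hXpX' : ⟪X, ψ X'⟫ = 0 := by
      linarith [hskew X X', hcX']
    have hpXpX' : ⟪ψ X, ψ X'⟫ = 0 := by
      rw [hmet, hXξ, hbX']; ring
    have hXX' : ⟪X, X'⟫ = 0 := hbX'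
    -- pair hcomb with X : get ⟪u, ψ X⟫ = 0
    have hb0 : ⟪u, ψ X⟫ = 0 := by
      have h := congrArg (fun w => ⟪X, w⟫) hcomb
      simp only [inner_sub_right, inner_smul_right, inner_zero_right] at h
      rw [hXX, hXpX, hXX', hXpX'] at h
      linarith
    -- pair hcomb with ψ X : get ⟪u, X⟫ = 0
    have ha0 : ⟪u, X⟫ = 0 := by
      have h := congrArg (fun w => ⟪ψ X, w⟫) hcomb
      simp only [inner_sub_right, inner_smul_right, inner_zero_right] at h
      have h1 : ⟪ψ X, X⟫ = 0 := by rw [real_inner_comm]; exact hXpX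
      rw [hpXpX, hpXpX', h1, hcX'] at h
      linarith
    refine ⟨ha0, hb0, ?_⟩
    rw [ha0, hb0] at hA
    simpa using hA
  -- any unit vector orthogonal to ξ exists
  obtain ⟨e, he, heξ, -, -⟩ := exists_unit_ortho3 hdim ξ 0 0
  have hv : v = 0 := (key e he heξ).2.2
  refine ⟨hv, ⟨⟪ξ, u⟫, ?_⟩⟩
  -- decompose u
  set w : V := u - ⟪ξ, u⟫ • ξ with hw
  have hwξ : ⟪ξ, w⟫ = 0 := by
    rw [hw, inner_sub_right, inner_smul_right, real_inner_self_eq_norm_sq, hξ]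
    ring
  have hw0 : w = 0 := by
    by_contra hw0
    have hwn : ‖w‖ ≠ 0 := norm_ne_zero_iff.mpr hw0
    have hXunit : ‖(‖w‖⁻¹ • w)‖ = 1 := by
      rw [norm_smul, norm_inv, norm_norm, inv_mul_cancel₀ hwn]
    have hXortho : ⟪ξ, ‖w‖⁻¹ • w⟫ = 0 := by
      rw [inner_smul_right, hwξ]; ring
    have h := (key _ hXunit hXortho).1
    rw [inner_smul_right] at h
    have huw : ⟪u, w⟫ = ‖w‖ ^ 2 := by
      have hww : ⟪w, w⟫ = ‖w‖ ^ 2 := real_inner_self_eq_norm_sq w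
      have h2 : ⟪u, w⟫ = ⟪w, w⟫ := by
        rw [hw]
        simp only [inner_sub_left, inner_sub_right, real_inner_smul_left, real_inner_smul_right]
        rw [real_inner_self_eq_norm_sq ξ, hξ, real_inner_comm u ξ]
        ring
      rw [h2, hww]
    rw [huw] at h
    have : ‖w‖ ^ 2 ≠ 0 := pow_ne_zero 2 hwn
    have : ‖w‖⁻¹ * ‖w‖ ^ 2 ≠ 0 := mul_ne_zero (inv_ne_zero hwn) this
    exact this h
  have : u - ⟪ξ, u⟫ • ξ = 0 := hw0
  linear_combination (norm := abel) this
end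

section
/- Let m ≥ 3 and let a : ℝ × ℝ^{m−1} → ℝ and f₃ : ℝ × ℝ^{m−1} → ℝ be smooth with a > 0 and f₃ nowhere zero, satisfying ∂ᵢ∂ⱼa = 0 for i ≠ j and ∂ᵢ∂ᵢa = f₃·a for all 1 ≤ i ≤ m−1. Then there exist smooth functions C, D₁, …, D_{m−1}, E : ℝ → ℝ with C nowhere zero such that a(t,x) = Σᵢ(C(t)xᵢ² + Dᵢ(t)xᵢ) + E(t) and f₃ = 2C/a. -/
open ContinuousLinearMap in
private lemma tp_fderiv_apply_const {E F G : Type*} [NormedAddCommGroup E] [NormedSpace ℝ E]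
    [NormedAddCommGroup F] [NormedSpace ℝ F] [NormedAddCommGroup G] [NormedSpace ℝ G]
    (c : E → F →L[ℝ] G) {x : E} (hc : DifferentiableAt ℝ c x) (v : F) (w : E) :
    fderiv ℝ (fun y => c y v) x w = (fderiv ℝ c x w) v := by
  have := fderiv_clm_apply hc (differentiableAt_const v)
  rw [show (fun y => c y v) = fun y => (c y) ((fun _ : E => v) y) from rfl, this]
  simp

private lemma tp_symm2 {E : Type*} [NormedAddCommGroup E] [NormedSpace ℝ E]
    (f : E → ℝ) (hf : ContDiff ℝ (⊤ : ℕ∞) f) (x v w : E) :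
    fderiv ℝ (fun y => fderiv ℝ f y v) x w = fderiv ℝ (fun y => fderiv ℝ f y w) x v := by
  have hd : DifferentiableAt ℝ (fderiv ℝ f) x :=
    ((hf.fderiv_right (m := (⊤ : ℕ∞)) (by simp)).differentiable (by simp)) x
  have hs : IsSymmSndFDerivAt ℝ f x := hf.contDiffAt.isSymmSndFDerivAt
    (by rw [minSmoothness_of_isRCLikeNormedField]; exact WithTop.coe_le_coe.mpr (le_top : (2 : ℕ∞) ≤ ⊤))
  rw [tp_fderiv_apply_const _ hd v w, tp_fderiv_apply_const _ hd w v]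
  exact hs w v

private lemma tp_const_of_partials {k : ℕ} (f : (Fin k → ℝ) → ℝ)
    (hf : Differentiable ℝ f)
    (h0 : ∀ (j : Fin k) (y : Fin k → ℝ), fderiv ℝ f y (Pi.single j 1) = 0)
    (x : Fin k → ℝ) : f x = f 0 := by
  apply is_const_of_fderiv_eq_zero hf
  intro y
  ext u
  have hu : u = ∑ j : Fin k, u j • (Pi.single j 1 : Fin k → ℝ) := by
    funext l
    simp [Pi.single_apply, Finset.sum_apply]
  rw [hu]
  simp [map_sum, map_smul, h0]

private lemma tp_chain {k : ℕ} (f : ℝ × (Fin k → ℝ) → ℝ) (hf : Differentiable ℝ f)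
    (t : ℝ) (x w : Fin k → ℝ) :
    fderiv ℝ (fun y => f (t, y)) x w = fderiv ℝ f (t, x) (0, w) := by
  have hι : HasFDerivAt (fun y : Fin k → ℝ => ((t, y) : ℝ × (Fin k → ℝ)))
      (ContinuousLinearMap.inr ℝ ℝ (Fin k → ℝ)) x :=
    (hasFDerivAt_const t x).prodMk (hasFDerivAt_id x)
  have h2 := ((hf (t, x)).hasFDerivAt.comp x hι).fderiv
  have h3 : (fun y => f (t, y)) = f ∘ Prod.mk t := rfl
  rw [h3, h2]
  rfl

theorem twisted_product_pde_characterization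
    {m : ℕ} (hm : 3 ≤ m) (k : ℕ) (hk : k = m - 1)
    (a f₃ : ℝ × (Fin k → ℝ) → ℝ)
    (ha : ContDiff ℝ (⊤ : ℕ∞) a) (hf₃smooth : ContDiff ℝ (⊤ : ℕ∞) f₃)
    (hapos : ∀ p, 0 < a p) (hf₃ : ∀ p, f₃ p ≠ 0)
    (hmix : ∀ (i j : Fin k), i ≠ j → ∀ p : ℝ × (Fin k → ℝ),
      fderiv ℝ (fun q => fderiv ℝ a q ((0 : ℝ), Pi.single j 1)) p
        ((0 : ℝ), Pi.single i 1) = 0)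
    (hdiag : ∀ (i : Fin k) (p : ℝ × (Fin k → ℝ)),
      fderiv ℝ (fun q => fderiv ℝ a q ((0 : ℝ), Pi.single i 1)) p
        ((0 : ℝ), Pi.single i 1) = f₃ p * a p) :
    ∃ (C E : ℝ → ℝ) (D : Fin k → ℝ → ℝ),
      ContDiff ℝ (⊤ : ℕ∞) C ∧ ContDiff ℝ (⊤ : ℕ∞) E ∧ (∀ i, ContDiff ℝ (⊤ : ℕ∞) (D i)) ∧
      (∀ t, C t ≠ 0) ∧
      (∀ (t : ℝ) (x : Fin k → ℝ),
        a (t, x) = (∑ i, (C t * (x i) ^ 2 + D i t * x i)) + E t) ∧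
      (∀ p : ℝ × (Fin k → ℝ), f₃ p = 2 * C p.1 / a p) := by
  have hadiff : Differentiable ℝ a := ha.differentiable (by simp)
  have hι : ∀ t : ℝ, ContDiff ℝ (⊤ : ℕ∞) (fun y : Fin k → ℝ => ((t, y) : ℝ × (Fin k → ℝ))) :=
    fun t => contDiff_const.prodMk contDiff_id
  have hb : ∀ t : ℝ, ContDiff ℝ (⊤ : ℕ∞) (fun y : Fin k → ℝ => a (t, y)) :=
    fun t => ha.comp (hι t)
  have hc : ∀ j : Fin k, ContDiff ℝ (⊤ : ℕ∞) (fun q => fderiv ℝ a q ((0 : ℝ), Pi.single j 1)) :=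
    fun j => (ha.fderiv_right (by simp)).clm_apply contDiff_const
  have hb1 : ∀ (t : ℝ) (x : Fin k → ℝ) (j : Fin k),
      fderiv ℝ (fun y => a (t, y)) x (Pi.single j 1)
        = fderiv ℝ a (t, x) ((0 : ℝ), Pi.single j 1) :=
    fun t x j => tp_chain a hadiff t x _
  have hb2 : ∀ (t : ℝ) (j : Fin k),
      (fun y => fderiv ℝ (fun z => a (t, z)) y (Pi.single j 1))
        = (fun y => fderiv ℝ a (t, y) ((0 : ℝ), Pi.single j 1)) :=
    fun t j => funext (fun y => hb1 t y j)
  have hb3 : ∀ (t : ℝ) (x : Fin k → ℝ) (i j : Fin k),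
      fderiv ℝ (fun y => fderiv ℝ (fun z => a (t, z)) y (Pi.single j 1)) x (Pi.single i 1)
        = fderiv ℝ (fun q => fderiv ℝ a q ((0 : ℝ), Pi.single j 1)) (t, x)
            ((0 : ℝ), Pi.single i 1) := by
    intro t x i j
    rw [hb2 t j]
    exact tp_chain _ ((hc j).differentiable (by simp)) t x _
  have hcb : ∀ (t : ℝ) (j : Fin k),
      ContDiff ℝ (⊤ : ℕ∞) (fun y => fderiv ℝ (fun z => a (t, z)) y (Pi.single j 1)) :=
    fun t j => ((hb t).fderiv_right (by simp)).clm_apply contDiff_const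
  -- Set up the data
  set C : ℝ → ℝ := fun t => f₃ (t, 0) * a (t, 0) / 2 with hCdef
  set D : Fin k → ℝ → ℝ := fun i t => fderiv ℝ a (t, 0) ((0 : ℝ), Pi.single i 1) with hDdef
  set E : ℝ → ℝ := fun t => a (t, 0) with hEdef
  -- f₃ * a is constant in x
  have hnt : Nontrivial (Fin k) := Fin.nontrivial_iff_two_le.mpr (by omega)
  have hC2 : ∀ (t : ℝ) (x : Fin k → ℝ), f₃ (t, x) * a (t, x) = 2 * C t := by
    intro t x
    have hφs : ContDiff ℝ (⊤ : ℕ∞) (fun y : Fin k → ℝ => f₃ (t, y) * a (t, y)) :=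
      (hf₃smooth.comp (hι t)).mul (hb t)
    have key : ∀ (j : Fin k) (y : Fin k → ℝ),
        fderiv ℝ (fun y : Fin k → ℝ => f₃ (t, y) * a (t, y)) y (Pi.single j 1) = 0 := by
      intro j y
      obtain ⟨i, hij⟩ := exists_ne j
      have hφeq : (fun y : Fin k → ℝ => f₃ (t, y) * a (t, y))
          = fun z => fderiv ℝ (fun w => fderiv ℝ (fun u => a (t, u)) w (Pi.single i 1)) z
              (Pi.single i 1) := by
        funext z
        rw [hb3 t z i i, hdiag i (t, z)]
      rw [hφeq, tp_symm2 _ (hcb t i) y (Pi.single i 1) (Pi.single j 1)]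
      have hzero : (fun w => fderiv ℝ
            (fun z => fderiv ℝ (fun u => a (t, u)) z (Pi.single i 1)) w (Pi.single j 1))
          = fun _ => (0 : ℝ) := by
        funext w
        rw [tp_symm2 _ (hb t) w (Pi.single i 1) (Pi.single j 1), hb3 t w i j,
          hmix i j hij (t, w)]
      rw [hzero]
      simp
    have := tp_const_of_partials _ (hφs.differentiable (by simp)) key x
    rw [this, hCdef]
    ring
  -- first partials
  have hfirst : ∀ (t : ℝ) (x : Fin k → ℝ) (j : Fin k),
      fderiv ℝ a (t, x) ((0 : ℝ), Pi.single j 1) = 2 * C t * x j + D j t := by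
    intro t x j
    have hcsm := hcb t j
    have hkey : ∀ (i : Fin k) (y : Fin k → ℝ),
        fderiv ℝ (fun y : Fin k → ℝ =>
          fderiv ℝ (fun z => a (t, z)) y (Pi.single j 1) - 2 * C t * y j) y
          (Pi.single i 1) = 0 := by
      intro i y
      have hq : HasFDerivAt (fun y : Fin k → ℝ => 2 * C t * y j)
          ((2 * C t) • (ContinuousLinearMap.proj j : (Fin k → ℝ) →L[ℝ] ℝ)) y :=
        ((ContinuousLinearMap.proj j : (Fin k → ℝ) →L[ℝ] ℝ).hasFDerivAt).const_mul (2 * C t)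
      have hcd : DifferentiableAt ℝ
          (fun y : Fin k → ℝ => fderiv ℝ (fun z => a (t, z)) y (Pi.single j 1)) y :=
        (hcsm.differentiable (by simp)) y
      rw [fderiv_fun_sub hcd hq.differentiableAt]
      simp only [ContinuousLinearMap.coe_sub', Pi.sub_apply]
      rw [hq.fderiv]
      by_cases hij : i = j
      · subst hij
        rw [hb3 t y i i, hdiag i (t, y), hC2 t y]
        simp
      · rw [hb3 t y i j, hmix i j hij (t, y)]
        simp [Pi.single_apply, hij]
    have hwd : Differentiable ℝ (fun y : Fin k → ℝ =>
        fderiv ℝ (fun z => a (t, z)) y (Pi.single j 1) - 2 * C t * y j) := by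
      apply Differentiable.sub (hcsm.differentiable (by simp))
      exact fun y => (((ContinuousLinearMap.proj j : (Fin k → ℝ) →L[ℝ] ℝ).hasFDerivAt).const_mul
        (2 * C t)).differentiableAt
    have hcst := tp_const_of_partials _ hwd hkey x
    simp only [Pi.zero_apply, mul_zero, sub_zero] at hcst
    rw [hb1 t x j, hb1 t 0 j] at hcst
    rw [hDdef]
    linarith [hcst]
  -- the main formula
  have hmain : ∀ (t : ℝ) (x : Fin k → ℝ),
      a (t, x) = (∑ i, (C t * (x i) ^ 2 + D i t * x i)) + a (t, 0) := by
    intro t x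
    have hterm : ∀ (y : Fin k → ℝ) (i : Fin k),
        HasFDerivAt (fun y : Fin k → ℝ => C t * (y i) ^ 2 + D i t * y i)
          ((C t * (2 * y i) + D i t) • (ContinuousLinearMap.proj i : (Fin k → ℝ) →L[ℝ] ℝ)) y := by
      intro y i
      have h1 : HasFDerivAt (fun y : Fin k → ℝ => y i)
          ((ContinuousLinearMap.proj i : (Fin k → ℝ) →L[ℝ] ℝ)) y :=
        (ContinuousLinearMap.proj i : (Fin k → ℝ) →L[ℝ] ℝ).hasFDerivAt
      have h2 := (h1.mul h1).const_mul (C t)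
      have h3 := h1.const_mul (D i t)
      have h4 := h2.add h3
      have hfun : (fun y : Fin k → ℝ => C t * (y i) ^ 2 + D i t * y i)
          = fun y : Fin k → ℝ => C t * (y i * y i) + D i t * y i := by
        funext z; ring
      have hder : ((C t * (2 * y i) + D i t) • (ContinuousLinearMap.proj i : (Fin k → ℝ) →L[ℝ] ℝ))
          = C t • (y i • (ContinuousLinearMap.proj i : (Fin k → ℝ) →L[ℝ] ℝ)
              + y i • (ContinuousLinearMap.proj i : (Fin k → ℝ) →L[ℝ] ℝ))
            + D i t • (ContinuousLinearMap.proj i : (Fin k → ℝ) →L[ℝ] ℝ) := by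
        ext u
        simp
        ring
      rw [hfun, hder]
      exact h4
    have hP : ∀ y : Fin k → ℝ, HasFDerivAt
        (fun y : Fin k → ℝ => ∑ i, (C t * (y i) ^ 2 + D i t * y i))
        (∑ i, (C t * (2 * y i) + D i t) • (ContinuousLinearMap.proj i : (Fin k → ℝ) →L[ℝ] ℝ)) y :=
      fun y => HasFDerivAt.fun_sum (fun i _ => hterm y i)
    have hPd : Differentiable ℝ
        (fun y : Fin k → ℝ => ∑ i, (C t * (y i) ^ 2 + D i t * y i)) :=
      fun y => (hP y).differentiableAt
    have hkey : ∀ (j : Fin k) (y : Fin k → ℝ),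
        fderiv ℝ (fun y : Fin k → ℝ =>
          a (t, y) - ∑ i, (C t * (y i) ^ 2 + D i t * y i)) y (Pi.single j 1) = 0 := by
      intro j y
      rw [fderiv_fun_sub (((hb t).differentiable (by simp)) y) (hPd y)]
      simp only [ContinuousLinearMap.coe_sub', Pi.sub_apply]
      rw [(hP y).fderiv, hb1 t y j, hfirst t y j]
      simp only [ContinuousLinearMap.sum_apply, ContinuousLinearMap.smul_apply,
        ContinuousLinearMap.proj_apply, Pi.single_apply, smul_eq_mul, mul_ite, mul_one, mul_zero]
      rw [Finset.sum_ite_eq' Finset.univ j (fun i => C t * (2 * y i) + D i t)]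
      simp
      ring
    have hQd : Differentiable ℝ (fun y : Fin k → ℝ =>
        a (t, y) - ∑ i, (C t * (y i) ^ 2 + D i t * y i)) :=
      ((hb t).differentiable (by simp)).sub hPd
    have hcst := tp_const_of_partials _ hQd hkey x
    simp only [Pi.zero_apply] at hcst
    have h0 : (∑ i, (C t * (0 : ℝ) ^ 2 + D i t * 0)) = 0 := by simp
    rw [h0, sub_zero] at hcst
    linarith [hcst]
  refine ⟨C, E, D, ?_, ?_, ?_, ?_, ?_, ?_⟩
  · exact ((hf₃smooth.comp ((contDiff_id).prodMk contDiff_const)).mul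
      (ha.comp ((contDiff_id).prodMk contDiff_const))).div_const 2
  · exact ha.comp ((contDiff_id).prodMk contDiff_const)
  · intro i
    exact (hc i).comp ((contDiff_id).prodMk contDiff_const)
  · intro t
    rw [hCdef]
    exact div_ne_zero (mul_ne_zero (hf₃ _) (ne_of_gt (hapos _))) two_ne_zero
  · exact hmain
  · intro p
    have := hC2 p.1 p.2
    rw [Prod.mk.eta] at this
    rw [eq_div_iff (ne_of_gt (hapos p))]
    exact this
end

section
/- Let V be a real inner product space of dimension 2n+1, n ≥ 2, with almost contact metric structure (φ, ξ, η, ⟨,⟩), and let ω be an antisymmetric bilinear form on D = ξ^⊥ and δ ∈ ℝ satisfying {3f₂ + (2n−2)f₃}ω(Y,Z) − f₂ω(φY,φZ) + 2f₂δ⟨φY,Z⟩ = 0 for all Y, Z ∈ D, where f₂, f₃ ∈ ℝ. Then {2f₂ + (n−1)f₃}(ω(Y,Z) − ω(φY,φZ)) = 0 for all Y, Z ∈ D, and (f₂ − f₃)δ = 0. -/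
open RealInnerProductSpace

theorem gssf_eta_identities
    {V : Type*} [NormedAddCommGroup V] [InnerProductSpace ℝ V] [FiniteDimensional ℝ V]
    (n : ℕ) (hn : 2 ≤ n) (hdim : Module.finrank ℝ V = 2 * n + 1)
    (φ : V →ₗ[ℝ] V) (ξ : V) (hξ : ‖ξ‖ = 1)
    (hφ2 : ∀ X, φ (φ X) = -X + ⟪ξ, X⟫ • ξ)
    (hφξ : φ ξ = 0) (hηφ : ∀ X, ⟪ξ, φ X⟫ = 0)
    (hmet : ∀ X Y, ⟪φ X, φ Y⟫ = ⟪X, Y⟫ - ⟪ξ, X⟫ * ⟪ξ, Y⟫)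
    (ω : V →ₗ[ℝ] V →ₗ[ℝ] ℝ)
    (hanti : ∀ Y Z : V, ⟪ξ, Y⟫ = 0 → ⟪ξ, Z⟫ = 0 → ω Y Z = -ω Z Y)
    (E : Fin (2 * n) → V) (hE : Orthonormal ℝ E) (hEξ : ∀ j, ⟪ξ, E j⟫ = 0)
    (δ f₂ f₃ : ℝ)
    (htrace : ∑ j, ω (φ (E j)) (E j) = 2 * δ)
    (heq : ∀ Y Z : V, ⟪ξ, Y⟫ = 0 → ⟪ξ, Z⟫ = 0 →
      (3 * f₂ + (2 * (n : ℝ) - 2) * f₃) * ω Y Z - f₂ * ω (φ Y) (φ Z)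
        + 2 * f₂ * δ * ⟪φ Y, Z⟫ = 0) :
    (∀ Y Z : V, ⟪ξ, Y⟫ = 0 → ⟪ξ, Z⟫ = 0 →
      (2 * f₂ + ((n : ℝ) - 1) * f₃) * (ω Y Z - ω (φ Y) (φ Z)) = 0) ∧
    (f₂ - f₃) * δ = 0 := by
  -- φ is skew-adjoint
  have hskew : ∀ X Z : V, ⟪φ X, Z⟫ = -⟪X, φ Z⟫ := by
    intro X Z
    have h := hmet X (φ Z)
    rw [hφ2 Z] at h
    have h1 : ⟪ξ, φ Z⟫ = 0 := hηφ Z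
    have h2 : ⟪φ X, ξ⟫ = 0 := by rw [real_inner_comm]; exact hηφ X
    simp only [inner_add_right, inner_neg_right, inner_smul_right, h1, h2, mul_zero] at h
    linarith
  -- φ² = -id on D
  have hφφ : ∀ Y : V, ⟪ξ, Y⟫ = 0 → φ (φ Y) = -Y := by
    intro Y hY
    rw [hφ2 Y, hY, zero_smul, add_zero]
  have part1 : ∀ Y Z : V, ⟪ξ, Y⟫ = 0 → ⟪ξ, Z⟫ = 0 →
      (2 * f₂ + ((n : ℝ) - 1) * f₃) * (ω Y Z - ω (φ Y) (φ Z)) = 0 := by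
    intro Y Z hY hZ
    have h1 := heq Y Z hY hZ
    have h2 := heq (φ Y) (φ Z) (hηφ Y) (hηφ Z)
    rw [hφφ Y hY, hφφ Z hZ] at h2
    simp only [map_neg, LinearMap.neg_apply, inner_neg_left, neg_neg] at h2
    have h3 : ⟪Y, φ Z⟫ = -⟪φ Y, Z⟫ := by rw [hskew Y Z]; ring
    rw [h3] at h2
    nlinarith [h1, h2]
  refine ⟨part1, ?_⟩
  -- per-index identity
  have hEE : ∀ j, ⟪φ (E j), φ (E j)⟫ = 1 := by
    intro j
    rw [hmet, hEξ j, mul_zero, sub_zero]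
    simpa using orthonormal_iff_ite.mp hE j j
  have hper : ∀ j, (f₂ - (3 * f₂ + (2 * (n : ℝ) - 2) * f₃)) * ω (φ (E j)) (E j)
      + 2 * f₂ * δ = 0 := by
    intro j
    have h := heq (E j) (φ (E j)) (hEξ j) (hηφ (E j))
    rw [hφφ (E j) (hEξ j)] at h
    have ha : ω (E j) (φ (E j)) = -ω (φ (E j)) (E j) :=
      hanti (E j) (φ (E j)) (hEξ j) (hηφ (E j))
    simp only [map_neg, LinearMap.map_neg, ha, hEE j, mul_one] at h
    linarith
  have hsum : ∑ j, ((f₂ - (3 * f₂ + (2 * (n : ℝ) - 2) * f₃)) * ω (φ (E j)) (E j)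
      + 2 * f₂ * δ) = 0 := Finset.sum_eq_zero fun j _ => hper j
  rw [Finset.sum_add_distrib, ← Finset.mul_sum, htrace, Finset.sum_const,
    Finset.card_univ, Fintype.card_fin, nsmul_eq_mul] at hsum
  push_cast at hsum
  have h4 : ((4:ℝ) * n - 4) * ((f₂ - f₃) * δ) = 0 := by linear_combination hsum
  have hn' : (2:ℝ) ≤ (n : ℝ) := by exact_mod_cast hn
  have hne : ((4:ℝ) * n - 4) ≠ 0 := by nlinarith
  exact (mul_eq_zero.mp h4).resolve_left hne
end
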